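/- arXiv:1707.02437 — 2 statements merged into one kernel-verified Lean document; each statement's English description precedes it below -/
import Mathlib

section
/- The expected loss is monotone nonincreasing in the prevention coefficient: if 0 < δ₁ ≤ δ₂, then componentwise C^{(δ₂)}(t) ≤ C^{(δ₁)}(t) on [0,T] for solutions of the SCS model with the same initial condition in [0,1]^N, and consequently L(x; G, α, β, δ₂, γ, T) ≤ L(x; G, α, β, δ₁, γ, T). -/
/-!
All three comparisons below are instances of one maximum principle: if `u(a) ≤ 0` and, whenever
a component of `u` is a largest one and is small and positive, its derivative is at most linear in
it, then `u ≤ 0`; a first-exit argument against the barrier `ε e^{L t}` proves it.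
Applied to `-C` and to `C - 1` it shows that `[0,1]^N` is forward invariant (at `C i = 0` the
inflow term is nonnegative, at `C i = 1` recovery dominates). Inside the box the field is
cooperative (increasing in `C j`, `j ≠ i`) and antitone in `δ`, so applied to `C₂ - C₁` it gives
`C^{(δ₂)} ≤ C^{(δ₁)}`; the loss inequality follows by integrating with positive weights.
-/

open Set Filter Topology

/-- The right-hand side of the SCS model. -/
noncomputable def scsF {N : ℕ} (a : Fin N → Fin N → ℝ) (w x : Fin N → ℝ) (α β δ γ : ℝ)
    (C : Fin N → ℝ) : Fin N → ℝ :=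
  fun i => (1 / (δ * w i)) * (α * x i + β * ∑ j, a j i * C j) * (1 - C i) - γ * w i * C i

theorem HasDerivWithinAt.eventually_lt_right {f : ℝ → ℝ} {f' x : ℝ}
    (hf : HasDerivWithinAt f f' (Ici x) x) (hf' : 0 < f') : ∀ᶠ z in 𝓝[>] x, f x < f z := by
  have hslope : Tendsto (slope f x) (𝓝[>] x) (𝓝 f') :=
    (hasDerivWithinAt_iff_tendsto_slope' (lt_irrefl x)).1 hf.Ioi_of_Ici
  filter_upwards [hslope.eventually_const_lt hf', self_mem_nhdsWithin] with z hz hxz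
  exact (slope_pos_iff_of_le (le_of_lt hxz)).1 hz

theorem nonneg_of_deriv_pos_at_zero {ι : Type*} [Finite ι] {g g' : ι → ℝ → ℝ} {a b : ℝ}
    (hcont : ∀ k, ContinuousOn (g k) (Icc a b))
    (hderiv : ∀ k, ∀ t ∈ Ico a b, HasDerivWithinAt (g k) (g' k t) (Ici t) t)
    (ha : ∀ k, 0 ≤ g k a)
    (hzero : ∀ t ∈ Ico a b, (∀ j, 0 ≤ g j t) → ∀ k, g k t = 0 → 0 < g' k t) :
    ∀ t ∈ Icc a b, ∀ k, 0 ≤ g k t := by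
  set s : Set ℝ := {t | ∀ k, 0 ≤ g k t}
  have hclosed : IsClosed (s ∩ Icc a b) := by
    have := (continuousOn_pi.2 hcont).preimage_isClosed_of_isClosed isClosed_Icc
      (isClosed_set_pi (i := univ) (s := fun _ : ι => Ici (0 : ℝ)) fun _ _ => isClosed_Ici)
    convert this using 1
    ext t
    simp [s, and_comm, Pi.le_def]
  have hstep : ∀ t ∈ s ∩ Ico a b, s ∈ 𝓝[>] t := by
    rintro t ⟨hts, ht⟩
    refine eventually_all.2 fun k => ?_
    rcases (hts k).eq_or_lt with hk | hk
    · filter_upwards [(hderiv k t ht).eventually_lt_right (hzero t ht hts k hk.symm)]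
        with z hz using hk ▸ hz.le
    · filter_upwards [nhdsWithin_mono t Ioi_subset_Ici_self
        ((hderiv k t ht).continuousWithinAt.eventually_const_lt hk)] with z hz using hz.le
  exact fun t ht => hclosed.Icc_subset_of_forall_mem_nhdsWithin ha hstep ht

theorem hasDerivAt_mul_exp_mul_sub (ε L c t : ℝ) :
    HasDerivAt (fun s => ε * Real.exp (L * (s - c))) (L * (ε * Real.exp (L * (t - c)))) t :=
  ((((hasDerivAt_id t).sub_const c).const_mul L).exp.const_mul ε).congr_deriv
    (by simp only [id]; ring)

theorem nonpos_of_deriv_le_mul_at_max {ι : Type*} [Finite ι] {u u' : ℝ → ι → ℝ} {K : ι → ℝ}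
    {a b ρ : ℝ} (hρ : 0 < ρ) (hu : ∀ t ∈ Icc a b, HasDerivAt u (u' t) t) (ha : ∀ i, u a i ≤ 0)
    (hmax : ∀ t ∈ Icc a b, ∀ i, 0 < u t i → u t i ≤ ρ → (∀ j, u t j ≤ u t i) →
      u' t i ≤ K i * u t i) :
    ∀ t ∈ Icc a b, ∀ i, u t i ≤ 0 := by
  intro t ht i
  by_contra! hpos
  obtain ⟨M, hM⟩ := Finite.bddAbove_range K
  set L := max M 0 + 1
  have hKL : ∀ k, K k < L := fun k =>
    ((hM ⟨k, rfl⟩).trans (le_max_left M 0)).trans_lt (lt_add_one _)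
  set c := min ρ (u t i)
  have hc : 0 < c := lt_min hρ hpos
  -- the barrier `E s = ε e^{L (s - a)}` grows strictly faster than `u` can at a maximum
  set ε := c / (2 * Real.exp (L * (b - a)))
  set E : ℝ → ℝ := fun s => ε * Real.exp (L * (s - a))
  have hE : ∀ s ∈ Icc a b, 0 < E s ∧ E s < c := by
    intro s hs
    have hexp : Real.exp (L * (s - a)) ≤ Real.exp (L * (b - a)) :=
      Real.exp_le_exp.2 (mul_le_mul_of_nonneg_left (by linarith [hs.2]) (by positivity))
    refine ⟨by positivity, ?_⟩
    calc E s ≤ ε * Real.exp (L * (b - a)) := mul_le_mul_of_nonneg_left hexp (by positivity)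
      _ = c / 2 := by simp only [ε]; field_simp
      _ < c := half_lt_self hc
  have hbarrier := nonneg_of_deriv_pos_at_zero (g := fun k s => E s - u s k)
    (g' := fun k s => L * E s - u' s k)
    (fun k s hs => ((hasDerivAt_mul_exp_mul_sub ε L a s).sub
      (hasDerivAt_pi.1 (hu s hs) k)).continuousAt.continuousWithinAt)
    (fun k s hs => ((hasDerivAt_mul_exp_mul_sub ε L a s).sub
      (hasDerivAt_pi.1 (hu s (Ico_subset_Icc_self hs)) k)).hasDerivWithinAt)
    (fun k => by linarith [ha k, (hE a (left_mem_Icc.2 (ht.1.trans ht.2))).1])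
    (by
      intro s hs hbelow k hk
      have hs' := Ico_subset_Icc_self hs
      have huk : u s k = E s := by linarith
      have hder := hmax s hs' k (huk ▸ (hE s hs').1)
        (by linarith [(hE s hs').2, min_le_left ρ (u t i)]) (fun j => by linarith [hbelow j])
      rw [huk] at hder
      linarith [mul_lt_mul_of_pos_right (hKL k) (hE s hs').1])
  have := hbarrier t ht i
  linarith [(hE t ht).2, min_le_right ρ (u t i)]

theorem integral_sum_mul_mono {ι : Type*} [Fintype ι] {w : ι → ℝ} {u v : ℝ → ι → ℝ} {T : ℝ}
    (hT : 0 ≤ T) (hw : ∀ i, 0 ≤ w i) (hu : ContinuousOn u (Icc 0 T))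
    (hv : ContinuousOn v (Icc 0 T)) (huv : ∀ t ∈ Icc 0 T, ∀ i, u t i ≤ v t i) :
    ∫ t in (0 : ℝ)..T, ∑ i, w i * u t i ≤ ∫ t in (0 : ℝ)..T, ∑ i, w i * v t i := by
  have hcont : Continuous fun y : ι → ℝ => ∑ i, w i * y i := by fun_prop
  have hint : ∀ y : ℝ → ι → ℝ, ContinuousOn y (Icc 0 T) →
      IntervalIntegrable (fun t => ∑ i, w i * y t i) MeasureTheory.volume 0 T := fun y hy =>
    (hcont.comp_continuousOn (uIcc_of_le hT ▸ hy)).intervalIntegrable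
  exact intervalIntegral.integral_mono_on hT (hint u hu) (hint v hv) fun t ht =>
    Finset.sum_le_sum fun i _ => mul_le_mul_of_nonneg_left (huv t ht i) (hw i)

theorem sum_mul_le_card_mul {ι : Type*} [Fintype ι] {c v : ι → ℝ} {d : ℝ}
    (hc : ∀ j, c j ∈ Icc (0 : ℝ) 1) (hv : ∀ j, v j ≤ d) (hd : 0 ≤ d) :
    ∑ j, c j * v j ≤ Fintype.card ι * d := by
  calc ∑ j, c j * v j ≤ ∑ _j : ι, d := Finset.sum_le_sum fun j _ =>
        (mul_le_mul_of_nonneg_left (hv j) (hc j).1).trans (mul_le_of_le_one_left hd (hc j).2)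
    _ = Fintype.card ι * d := by simp

section SCS

variable {N : ℕ} {a : Fin N → Fin N → ℝ} {w x : Fin N → ℝ} {α β γ T : ℝ}

theorem neg_scsF_le_at_min {δ : ℝ} (hα : 0 ≤ α) (hβ : 0 ≤ β) (hγ : 0 ≤ γ) (hδ : 0 < δ)
    (ha : ∀ i j, a i j ∈ Icc (0 : ℝ) 1) (hx : ∀ i, 0 ≤ x i) (hw : ∀ i, 0 < w i)
    {C : Fin N → ℝ} {i : Fin N} (hCi : C i ≤ 0) (hCi₁ : -1 ≤ C i) (hmin : ∀ j, C i ≤ C j) :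
    -scsF a w x α β δ γ C i ≤ 2 * β * N / (δ * w i) * -C i := by
  have hp : 0 < 1 / (δ * w i) := one_div_pos.2 (mul_pos hδ (hw i))
  have hsum : -∑ j, a j i * C j ≤ N * -C i := by
    have := sum_mul_le_card_mul (c := fun j => a j i) (v := fun j => -C j) (fun j => ha j i)
      (fun j => neg_le_neg (hmin j)) (neg_nonneg.2 hCi)
    simpa using this
  have hinflow : -(β * N * -C i) ≤ α * x i + β * ∑ j, a j i * C j := by
    nlinarith [mul_nonneg hα (hx i), mul_le_mul_of_nonneg_left hsum hβ]
  have hNd : 0 ≤ β * N * -C i := mul_nonneg (mul_nonneg hβ N.cast_nonneg) (neg_nonneg.2 hCi)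
  simp only [scsF]
  rw [show 2 * β * N / (δ * w i) * -C i = 1 / (δ * w i) * (β * N * -C i) * 2 by ring]
  nlinarith [mul_le_mul_of_nonneg_left hinflow hp.le, mul_nonneg hp.le hNd,
    mul_nonneg (mul_nonneg hγ (hw i).le) (neg_nonneg.2 hCi)]

theorem scsF_nonpos_of_one_le {δ : ℝ} (hα : 0 ≤ α) (hβ : 0 ≤ β) (hγ : 0 ≤ γ) (hδ : 0 < δ)
    (ha : ∀ i j, 0 ≤ a i j) (hx : ∀ i, 0 ≤ x i) (hw : ∀ i, 0 < w i)
    {C : Fin N → ℝ} (hC : ∀ j, 0 ≤ C j) {i : Fin N} (hCi : 1 ≤ C i) :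
    scsF a w x α β δ γ C i ≤ 0 := by
  have hinflow : 0 ≤ α * x i + β * ∑ j, a j i * C j :=
    add_nonneg (mul_nonneg hα (hx i))
      (mul_nonneg hβ (Finset.sum_nonneg fun j _ => mul_nonneg (ha j i) (hC j)))
  have hp : 0 < 1 / (δ * w i) := one_div_pos.2 (mul_pos hδ (hw i))
  simp only [scsF]
  nlinarith [mul_nonneg (mul_nonneg hp.le hinflow) (sub_nonneg.2 hCi),
    mul_nonneg (mul_nonneg hγ (hw i).le) (le_trans zero_le_one hCi)]

theorem scsF_sub_scsF_le_at_max {δ₁ δ₂ : ℝ} (hα : 0 ≤ α) (hβ : 0 ≤ β) (hγ : 0 ≤ γ)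
    (hδ₁ : 0 < δ₁) (hδ : δ₁ ≤ δ₂) (ha : ∀ i j, a i j ∈ Icc (0 : ℝ) 1) (hx : ∀ i, 0 ≤ x i)
    (hw : ∀ i, 0 < w i) {C D : Fin N → ℝ} (hC : ∀ j, C j ∈ Icc (0 : ℝ) 1)
    (hD : ∀ j, D j ∈ Icc (0 : ℝ) 1) {i : Fin N} (hi : C i ≤ D i)
    (hmax : ∀ j, D j - C j ≤ D i - C i) :
    scsF a w x α β δ₂ γ D i - scsF a w x α β δ₁ γ C i ≤ β * N / (δ₁ * w i) * (D i - C i) := by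
  set p₁ := 1 / (δ₁ * w i)
  set p₂ := 1 / (δ₂ * w i)
  set b₁ := α * x i + β * ∑ j, a j i * C j
  set b₂ := α * x i + β * ∑ j, a j i * D j
  have hp₁ : 0 < p₁ := one_div_pos.2 (mul_pos hδ₁ (hw i))
  have hp : p₂ ≤ p₁ :=
    one_div_le_one_div_of_le (mul_pos hδ₁ (hw i)) (mul_le_mul_of_nonneg_right hδ (hw i).le)
  have hb₁ : 0 ≤ b₁ := add_nonneg (mul_nonneg hα (hx i))
    (mul_nonneg hβ (Finset.sum_nonneg fun j _ => mul_nonneg (ha j i).1 (hC j).1))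
  have hb₂ : 0 ≤ b₂ := add_nonneg (mul_nonneg hα (hx i))
    (mul_nonneg hβ (Finset.sum_nonneg fun j _ => mul_nonneg (ha j i).1 (hD j).1))
  have hb : b₂ - b₁ ≤ β * N * (D i - C i) := by
    have := sum_mul_le_card_mul (c := fun j => a j i) (v := fun j => D j - C j)
      (fun j => ha j i) hmax (sub_nonneg.2 hi)
    simp only [Fintype.card_fin, mul_sub, Finset.sum_sub_distrib] at this
    simp only [b₁, b₂]
    nlinarith [mul_le_mul_of_nonneg_left this hβ]
  have hDi := hD i
  have hcoupling : (b₂ - b₁) * (1 - D i) ≤ β * N * (D i - C i) := by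
    nlinarith [mul_le_mul_of_nonneg_right hb (sub_nonneg.2 hDi.2),
      mul_nonneg (mul_nonneg (mul_nonneg hβ N.cast_nonneg) (sub_nonneg.2 hi)) hDi.1]
  show p₂ * b₂ * (1 - D i) - γ * w i * D i - (p₁ * b₁ * (1 - C i) - γ * w i * C i)
    ≤ β * N / (δ₁ * w i) * (D i - C i)
  rw [show β * N / (δ₁ * w i) * (D i - C i) = p₁ * (β * N * (D i - C i)) by ring]
  -- raising `δ` only shrinks the nonnegative inflow term `b₂ (1 - D i)`
  nlinarith [mul_le_mul_of_nonneg_right hp (mul_nonneg hb₂ (sub_nonneg.2 hDi.2)),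
    mul_nonneg hp₁.le (mul_nonneg hb₁ (sub_nonneg.2 hi)),
    mul_nonneg (mul_nonneg hγ (hw i).le) (sub_nonneg.2 hi),
    mul_le_mul_of_nonneg_left hcoupling hp₁.le]

theorem scs_nonneg {δ : ℝ} (hα : 0 ≤ α) (hβ : 0 ≤ β) (hγ : 0 ≤ γ) (hδ : 0 < δ)
    (ha : ∀ i j, a i j ∈ Icc (0 : ℝ) 1) (hx : ∀ i, 0 ≤ x i) (hw : ∀ i, 0 < w i)
    {C : ℝ → Fin N → ℝ} (hC : ∀ t ∈ Icc 0 T, HasDerivAt C (scsF a w x α β δ γ (C t)) t)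
    (h0 : ∀ i, 0 ≤ C 0 i) :
    ∀ t ∈ Icc 0 T, ∀ i, 0 ≤ C t i := by
  have := nonpos_of_deriv_le_mul_at_max (u := fun t => -C t)
    (K := fun i => 2 * β * N / (δ * w i)) one_pos (fun t ht => (hC t ht).neg)
    (fun i => neg_nonpos.2 (h0 i))
    (fun t _ i hpos hle hmin => neg_scsF_le_at_min hα hβ hγ hδ ha hx hw
      (by simpa using hpos.le) (by simpa [neg_le] using hle) (by simpa using hmin))
  simpa using this

theorem scs_mem_Icc {δ : ℝ} (hα : 0 ≤ α) (hβ : 0 ≤ β) (hγ : 0 ≤ γ) (hδ : 0 < δ)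
    (ha : ∀ i j, a i j ∈ Icc (0 : ℝ) 1) (hx : ∀ i, 0 ≤ x i) (hw : ∀ i, 0 < w i)
    {C : ℝ → Fin N → ℝ} (hC : ∀ t ∈ Icc 0 T, HasDerivAt C (scsF a w x α β δ γ (C t)) t)
    (h0 : ∀ i, C 0 i ∈ Icc (0 : ℝ) 1) :
    ∀ t ∈ Icc 0 T, ∀ i, C t i ∈ Icc (0 : ℝ) 1 := by
  have hnonneg := scs_nonneg hα hβ hγ hδ ha hx hw hC fun i => (h0 i).1
  have := nonpos_of_deriv_le_mul_at_max (u := fun t => C t - 1) (K := 0) one_pos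
    (fun t ht => (hC t ht).sub_const 1) (fun i => by simpa using (h0 i).2)
    (fun t ht i hpos _ _ => by
      simpa using scsF_nonpos_of_one_le hα hβ hγ hδ (fun i j => (ha i j).1) hx hw
        (hnonneg t ht) (by simpa using hpos.le))
  exact fun t ht i => ⟨hnonneg t ht i, by simpa using this t ht i⟩

theorem scs_le_of_delta_le {δ₁ δ₂ : ℝ} (hα : 0 ≤ α) (hβ : 0 ≤ β) (hγ : 0 ≤ γ) (hδ₁ : 0 < δ₁)
    (hδ : δ₁ ≤ δ₂) (ha : ∀ i j, a i j ∈ Icc (0 : ℝ) 1) (hx : ∀ i, 0 ≤ x i) (hw : ∀ i, 0 < w i)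
    {C₁ C₂ : ℝ → Fin N → ℝ}
    (hC₁ : ∀ t ∈ Icc 0 T, HasDerivAt C₁ (scsF a w x α β δ₁ γ (C₁ t)) t)
    (hC₂ : ∀ t ∈ Icc 0 T, HasDerivAt C₂ (scsF a w x α β δ₂ γ (C₂ t)) t)
    (h₀ : C₁ 0 = C₂ 0) (h₀box : ∀ i, C₁ 0 i ∈ Icc (0 : ℝ) 1) :
    ∀ t ∈ Icc 0 T, ∀ i, C₂ t i ≤ C₁ t i := by
  have hbox₁ := scs_mem_Icc hα hβ hγ hδ₁ ha hx hw hC₁ h₀box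
  have hbox₂ := scs_mem_Icc hα hβ hγ (hδ₁.trans_le hδ) ha hx hw hC₂ (h₀ ▸ h₀box)
  have := nonpos_of_deriv_le_mul_at_max (u := fun t => C₂ t - C₁ t)
    (K := fun i => β * N / (δ₁ * w i)) one_pos (fun t ht => (hC₂ t ht).sub (hC₁ t ht))
    (fun i => by simp [h₀])
    (fun t ht i hpos _ hmax => scsF_sub_scsF_le_at_max hα hβ hγ hδ₁ hδ ha hx hw
      (hbox₁ t ht) (hbox₂ t ht) (by simpa using hpos.le) hmax)
  exact fun t ht i => by simpa using this t ht i

end SCS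

/-- The expected loss is monotone nonincreasing in the prevention coefficient:
if 0 < δ₁ ≤ δ₂ then componentwise C^{(δ₂)} ≤ C^{(δ₁)} on [0,T], and consequently
L(x; G, α, β, δ₂, γ, T) ≤ L(x; G, α, β, δ₁, γ, T). -/
theorem loss_antitone_in_prevention_coeff {N : ℕ} (a : Fin N → Fin N → ℝ)
    (ha : ∀ i j, a i j = 0 ∨ a i j = 1)
    (w x : Fin N → ℝ) (α β δ₁ δ₂ γ T : ℝ)
    (hα : 0 < α) (hβ : 0 < β) (hδ₁ : 0 < δ₁) (hδ : δ₁ ≤ δ₂) (hγ : 0 < γ)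
    (hx : ∀ i, 0 ≤ x i) (hw : ∀ i, 0 < w i) (hT : 0 < T)
    (C1 C2 : ℝ → Fin N → ℝ)
    (hC1 : ∀ t ∈ Set.Icc (0 : ℝ) T, HasDerivAt C1 (scsF a w x α β δ₁ γ (C1 t)) t)
    (hC2 : ∀ t ∈ Set.Icc (0 : ℝ) T, HasDerivAt C2 (scsF a w x α β δ₂ γ (C2 t)) t)
    (h0 : C1 0 = C2 0) (h0box : ∀ i, C1 0 i ∈ Set.Icc (0 : ℝ) 1) :
    (∀ t ∈ Set.Icc (0 : ℝ) T, ∀ i, C2 t i ≤ C1 t i) ∧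
    (∫ t in (0:ℝ)..T, ∑ i, w i * C2 t i) ≤ ∫ t in (0:ℝ)..T, ∑ i, w i * C1 t i := by
  have ha' : ∀ i j, a i j ∈ Icc (0 : ℝ) 1 := fun i j => by rcases ha i j with h | h <;> simp [h]
  have hle := scs_le_of_delta_le hα.le hβ.le hγ.le hδ₁ hδ ha' hx hw hC1 hC2 h0 h0box
  exact ⟨hle, integral_sum_mul_mono hT.le (fun i => (hw i).le)
    (fun t ht => (hC2 t ht).continuousAt.continuousWithinAt)
    (fun t ht => (hC1 t ht).continuousAt.continuousWithinAt) hle⟩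
end

section
/- The risk of an organization is monotone nondecreasing in the attack budget per unit time: if 0 < B₁ < B₂, then R(G, α, β, δ, γ, T, B₁) ≤ R(G, α, β, δ, γ, T, B₂). -/
/-!
Scaling a strategy `x ∈ Ω_{B₁}` by `B₂ / B₁ ≥ 1` gives a strategy in `Ω_{B₂}` that is
componentwise larger, and the SCS system is cooperative (quasi-monotone): raising `x` or the
coupling terms only raises the vector field off the diagonal. A Kamke-type comparison
argument — perturb the gap `v - u` by `ε e^{(K+1)t}` and look at the first time a component of
it vanishes — then shows that the solution for the larger strategy dominates, hence so does
its weighted integral. The same comparison against the supersolution `C ≡ 1` keeps all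
solutions below `1`, which bounds the risk and makes the supremum over `Ω_{B₂}` meaningful.
-/

open Set Topology

theorem HasDerivAt.eventually_neg_left_of_pos {f : ℝ → ℝ} {d c : ℝ} (hf : HasDerivAt f d c)
    (hd : 0 < d) (hc : f c = 0) : ∀ᶠ t in 𝓝[<] c, f t < 0 := by
  have hslope : ∀ᶠ t in 𝓝[<] c, 0 < slope f c t :=
    (hasDerivAt_iff_tendsto_slope.1 hf).eventually (eventually_gt_nhds hd)
      |>.filter_mono (nhdsLT_le_nhdsNE c)
  filter_upwards [hslope, self_mem_nhdsWithin] with t ht htc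
  exact neg_of_slope_pos htc ht hc

theorem forall_pos_of_hasDerivAt_pos_of_eq_zero {ι : Type*} [Finite ι] {T : ℝ}
    {g : ι → ℝ → ℝ} (hg : ∀ i, ContinuousOn (g i) (Icc 0 T)) (h0 : ∀ i, 0 < g i 0)
    (hderiv : ∀ t ∈ Icc 0 T, ∀ i, g i t = 0 → (∀ j, 0 ≤ g j t) →
      ∃ d > 0, HasDerivAt (g i) d t) :
    ∀ t ∈ Icc 0 T, ∀ i, 0 < g i t := by
  by_contra! ⟨t₀, ht₀, i₀, hi₀⟩
  set S := ⋃ i, Icc 0 T ∩ g i ⁻¹' Iic 0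
  have hS : IsClosed S := isClosed_iUnion_of_finite fun i =>
    (hg i).preimage_isClosed_of_isClosed isClosed_Icc isClosed_Iic
  have hSbdd : BddBelow S := ⟨0, fun t ht => (mem_iUnion.1 ht).choose_spec.1.1⟩
  set c := sInf S
  obtain ⟨i, hcT, hci⟩ := mem_iUnion.1 (hS.csInf_mem ⟨t₀, mem_iUnion.2 ⟨i₀, ht₀, hi₀⟩⟩ hSbdd)
  have hbefore : ∀ t ∈ Ico 0 c, ∀ j, 0 < g j t := fun t ht j => by
    by_contra! h
    exact notMem_of_lt_csInf ht.2 hSbdd (mem_iUnion.2 ⟨j, ⟨ht.1, ht.2.le.trans hcT.2⟩, h⟩)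
  have hc : 0 < c := hcT.1.lt_of_ne fun h => (h0 i).not_ge (h ▸ hci)
  have hnonneg : ∀ j, 0 ≤ g j c := fun j =>
    ContinuousWithinAt.closure_le (by rw [closure_Ico hc.ne]; exact right_mem_Icc.2 hc.le)
      continuousWithinAt_const
      ((hg j c hcT).mono fun t ht => ⟨ht.1, ht.2.le.trans hcT.2⟩)
      fun t ht => (hbefore t ht j).le
  have hci₀ : g i c = 0 := le_antisymm hci (hnonneg i)
  obtain ⟨d, hd, hgi⟩ := hderiv c hcT i hci₀ hnonneg
  obtain ⟨t, hneg, ht⟩ :=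
    ((hgi.eventually_neg_left_of_pos hd hci₀).and (Ioo_mem_nhdsLT hc)).exists
  exact hneg.not_gt (hbefore t (Ioo_subset_Ico_self ht) i)

theorem le_of_hasDerivAt_of_quasiMonotone {ι : Type*} [Fintype ι] {T : ℝ}
    {u v F G Φ : ℝ → ι → ℝ} (hΦ : ContinuousOn Φ (Icc 0 T))
    (hu : ∀ t ∈ Icc 0 T, HasDerivAt u (F t) t) (hv : ∀ t ∈ Icc 0 T, HasDerivAt v (G t) t)
    (h0 : u 0 ≤ v 0)
    (hFG : ∀ t ∈ Icc 0 T, ∀ i, ∀ r > 0, v t i = u t i - r → (∀ j, u t j - v t j ≤ r) →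
      F t i - G t i ≤ Φ t i * r) :
    ∀ t ∈ Icc 0 T, u t ≤ v t := by
  obtain ⟨K, hK⟩ := isCompact_Icc.exists_bound_of_continuousOn hΦ
  have hΦK : ∀ t ∈ Icc 0 T, ∀ i, Φ t i ≤ K := fun t ht i =>
    (Real.le_norm_self _).trans ((norm_le_pi_norm (Φ t) i).trans (hK t ht))
  have hu' : ∀ i, ∀ t ∈ Icc 0 T, HasDerivAt (u · i) (F t i) t :=
    fun i t ht => hasDerivAt_pi.1 (hu t ht) i
  have hv' : ∀ i, ∀ t ∈ Icc 0 T, HasDerivAt (v · i) (G t i) t :=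
    fun i t ht => hasDerivAt_pi.1 (hv t ht) i
  intro t ht i
  refine le_of_forall_pos_lt_add fun ε hε => ?_
  -- `p` equals `ε` at time `t` and grows at rate `K + 1`, faster than `F - G` can close the gap.
  set p : ℝ → ℝ := fun s => ε * Real.exp ((K + 1) * (s - t))
  have hp : ∀ s, HasDerivAt p (p s * (K + 1)) s := fun s => by
    simpa [p, mul_assoc] using
      ((((hasDerivAt_id s).sub_const t).const_mul (K + 1)).exp).const_mul ε
  have hgap := forall_pos_of_hasDerivAt_pos_of_eq_zero (T := T)
    (g := fun j s => v s j - u s j + p s)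
    (fun j => ((HasDerivAt.continuousOn (hv' j)).sub (HasDerivAt.continuousOn (hu' j))).add
      (HasDerivAt.continuousOn fun s _ => hp s))
    (fun j => by
      have : 0 < p 0 := by positivity
      linarith [h0 j])
    (fun s hs j hj hall => by
      have hr : 0 < p s := by positivity
      refine ⟨G s j - F s j + p s * (K + 1), ?_, ((hv' j s hs).sub (hu' j s hs)).add (hp s)⟩
      have := hFG s hs j (p s) hr (by linarith) fun k => by linarith [hall k]
      nlinarith [hΦK s hs j])
    t ht i
  have : p t = ε := by simp [p]
  linarith

theorem scsF_sub_scsF_le {N : ℕ} {a : Fin N → Fin N → ℝ} {w x y C D : Fin N → ℝ}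
    {α β δ γ r : ℝ} {i : Fin N} (ha : ∀ j, 0 ≤ a j i) (hα : 0 ≤ α) (hβ : 0 ≤ β) (hδ : 0 ≤ δ)
    (hγ : 0 ≤ γ) (hw : 0 ≤ w i) (hxy : x i ≤ y i) (hr : 0 ≤ r) (hD : D i ≤ 1)
    (hDC : D i = C i - r) (hCD : ∀ j, C j - D j ≤ r) :
    scsF a w x α β δ γ C i - scsF a w y α β δ γ D i ≤
      (1 / (δ * w i) * β * (∑ j, a j i) * (1 - D i) +
        |1 / (δ * w i) * (α * x i + β * ∑ j, a j i * C j)|) * r := by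
  set c := 1 / (δ * w i)
  set A := c * (α * x i + β * ∑ j, a j i * C j)
  have hc : 0 ≤ c := by positivity
  have hS : ∑ j, a j i * C j - ∑ j, a j i * D j ≤ (∑ j, a j i) * r := by
    rw [← Finset.sum_sub_distrib, Finset.sum_mul]
    gcongr with j
    nlinarith [ha j, hCD j]
  have hgain : c * (α * (x i - y i) + β * (∑ j, a j i * C j - ∑ j, a j i * D j)) * (1 - D i) ≤
      c * β * (∑ j, a j i) * (1 - D i) * r := by
    have : α * (x i - y i) ≤ 0 := mul_nonpos_of_nonneg_of_nonpos hα (by linarith)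
    have : β * (∑ j, a j i * C j - ∑ j, a j i * D j) ≤ β * ((∑ j, a j i) * r) := by gcongr
    have : 0 ≤ c * (1 - D i) := mul_nonneg hc (by linarith)
    nlinarith
  have hA : -(A * r) ≤ |A| * r := by nlinarith [neg_abs_le A]
  have hloss : 0 ≤ γ * w i * r := by positivity
  calc scsF a w x α β δ γ C i - scsF a w y α β δ γ D i
      = c * (α * (x i - y i) + β * (∑ j, a j i * C j - ∑ j, a j i * D j)) * (1 - D i)
          - A * r - γ * w i * r := by
        simp only [scsF, A, c]
        rw [show C i = D i + r by linarith]
        ring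
    _ ≤ _ := by linarith

theorem scs_le_of_supersolution {N : ℕ} {a : Fin N → Fin N → ℝ} {w x y : Fin N → ℝ}
    {α β δ γ T : ℝ} (ha : ∀ i j, 0 ≤ a i j) (hα : 0 ≤ α) (hβ : 0 ≤ β) (hδ : 0 ≤ δ)
    (hγ : 0 ≤ γ) (hw : ∀ i, 0 ≤ w i) (hxy : x ≤ y) {u v G : ℝ → Fin N → ℝ}
    (hu : ∀ t ∈ Icc 0 T, HasDerivAt u (scsF a w x α β δ γ (u t)) t)
    (hv : ∀ t ∈ Icc 0 T, HasDerivAt v (G t) t)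
    (hG : ∀ t ∈ Icc 0 T, scsF a w y α β δ γ (v t) ≤ G t)
    (hv1 : ∀ t ∈ Icc 0 T, v t ≤ 1) (h0 : u 0 ≤ v 0) :
    ∀ t ∈ Icc 0 T, u t ≤ v t := by
  have hu_cont := HasDerivAt.continuousOn hu
  have hv_cont := HasDerivAt.continuousOn hv
  refine le_of_hasDerivAt_of_quasiMonotone
    (Φ := fun t i => 1 / (δ * w i) * β * (∑ j, a j i) * (1 - v t i) +
      |1 / (δ * w i) * (α * x i + β * ∑ j, a j i * u t j)|)
    (continuousOn_pi.2 fun i => by fun_prop) hu hv h0 fun t ht i r hr hvu huv => ?_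
  exact (sub_le_sub_left (hG t ht i) _).trans <| scsF_sub_scsF_le (ha · i) hα hβ hδ hγ (hw i)
    (hxy i) hr.le (hv1 t ht i) hvu huv

theorem scs_le_one {N : ℕ} {a : Fin N → Fin N → ℝ} {w x : Fin N → ℝ} {α β δ γ T : ℝ}
    (ha : ∀ i j, 0 ≤ a i j) (hα : 0 ≤ α) (hβ : 0 ≤ β) (hδ : 0 ≤ δ) (hγ : 0 ≤ γ)
    (hw : ∀ i, 0 ≤ w i) {u : ℝ → Fin N → ℝ}
    (hu : ∀ t ∈ Icc 0 T, HasDerivAt u (scsF a w x α β δ γ (u t)) t) (h0 : u 0 ≤ 1) :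
    ∀ t ∈ Icc 0 T, u t ≤ 1 :=
  scs_le_of_supersolution ha hα hβ hδ hγ hw le_rfl hu (G := 0)
    (fun t _ => hasDerivAt_const t 1)
    (fun _ _ i => by simpa [scsF] using mul_nonneg hγ (hw i))
    (fun _ _ => le_rfl) h0

def budgetSet (ι : Type*) [Fintype ι] (B : ℝ) : Set (ι → ℝ) :=
  {u | (∀ i, 0 ≤ u i) ∧ ∑ i, u i = B}

theorem image_smul_budgetSet {ι : Type*} [Fintype ι] {c : ℝ} (hc : 0 < c) (B : ℝ) :
    (c • ·) '' budgetSet ι B = budgetSet ι (c * B) := by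
  ext u
  constructor
  · rintro ⟨v, ⟨hv, hvB⟩, rfl⟩
    exact ⟨fun i => mul_nonneg hc.le (hv i), by simp [← Finset.mul_sum, hvB]⟩
  · rintro ⟨hu, huB⟩
    refine ⟨c⁻¹ • u, ⟨fun i => mul_nonneg (inv_nonneg.2 hc.le) (hu i), ?_⟩, ?_⟩
    · simp [← Finset.mul_sum, huB, hc.ne']
    · simp [smul_smul, hc.ne']

theorem csSup_image_le_csSup_image {α β : Type*} [ConditionallyCompleteLattice β] {S : Set α}
    {f g : α → β} (hg : BddAbove (g '' S)) (hfg : ∀ x ∈ S, f x ≤ g x) :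
    sSup (f '' S) ≤ sSup (g '' S) := by
  rw [sSup_image', sSup_image']
  exact ciSup_mono (by rwa [← image_eq_range]) fun x => hfg x x.2

theorem integral_weighted_sum_le_of_le {ι : Type*} [Fintype ι] {T : ℝ} (hT : 0 ≤ T)
    {w : ι → ℝ} (hw : 0 ≤ w) {u v : ℝ → ι → ℝ} (hu : ContinuousOn u (Icc 0 T))
    (hv : ContinuousOn v (Icc 0 T)) (huv : ∀ t ∈ Icc 0 T, u t ≤ v t) :
    ∫ t in 0..T, ∑ i, w i * u t i ≤ ∫ t in 0..T, ∑ i, w i * v t i := by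
  refine intervalIntegral.integral_mono_on hT ?_ ?_
    fun t ht => Finset.sum_le_sum fun i _ => mul_le_mul_of_nonneg_left (huv t ht i) (hw i)
  all_goals exact ContinuousOn.intervalIntegrable (by rw [uIcc_of_le hT]; fun_prop)

theorem sSup_image_budgetSet_mono {ι : Type*} [Fintype ι] {L : (ι → ℝ) → ℝ}
    {B₁ B₂ : ℝ} (hB₁ : 0 < B₁) (hB : B₁ ≤ B₂) (hL : BddAbove (L '' budgetSet ι B₂))
    (hmono : ∀ x y, 0 ≤ x → x ≤ y → L x ≤ L y) :
    sSup (L '' budgetSet ι B₁) ≤ sSup (L '' budgetSet ι B₂) := by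
  set c := B₂ / B₁
  have hc : 1 ≤ c := (one_le_div hB₁).2 hB
  have hΩ : budgetSet ι B₂ = (c • ·) '' budgetSet ι B₁ := by
    rw [image_smul_budgetSet (by linarith), div_mul_cancel₀ _ hB₁.ne']
  rw [hΩ, image_image] at hL ⊢
  refine csSup_image_le_csSup_image hL fun x hx => hmono _ _ hx.1 fun i => ?_
  exact le_mul_of_one_le_left (hx.1 i) hc

/-- The risk is monotone nondecreasing in the attack budget per unit time:
if 0 < B₁ < B₂ then R(G, α, β, δ, γ, T, B₁) ≤ R(G, α, β, δ, γ, T, B₂). -/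
theorem risk_monotone_in_budget {N : ℕ} (a : Fin N → Fin N → ℝ)
    (ha : ∀ i j, a i j = 0 ∨ a i j = 1)
    (w : Fin N → ℝ) (α β δ γ T B₁ B₂ : ℝ)
    (hα : 0 < α) (hβ : 0 < β) (hδ : 0 < δ) (hγ : 0 < γ)
    (hw : ∀ i, 0 < w i) (hT : 0 < T) (hB₁ : 0 < B₁) (hB : B₁ < B₂)
    (C0 : Fin N → ℝ) (h0box : ∀ i, C0 i ∈ Set.Icc (0 : ℝ) 1)
    (sol : (Fin N → ℝ) → ℝ → Fin N → ℝ)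
    (hsol : ∀ x : Fin N → ℝ, (∀ i, 0 ≤ x i) → sol x 0 = C0 ∧
      ∀ t ∈ Set.Icc (0 : ℝ) T, HasDerivAt (sol x) (scsF a w x α β δ γ (sol x t)) t) :
    sSup ((fun x => ∫ t in (0:ℝ)..T, ∑ i, w i * sol x t i) ''
        {u : Fin N → ℝ | (∀ i, 0 ≤ u i) ∧ ∑ i, u i = B₁}) ≤
    sSup ((fun x => ∫ t in (0:ℝ)..T, ∑ i, w i * sol x t i) ''
        {u : Fin N → ℝ | (∀ i, 0 ≤ u i) ∧ ∑ i, u i = B₂}) := by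
  have ha₀ : ∀ i j, 0 ≤ a i j := fun i j => by rcases ha i j with h | h <;> simp [h]
  have hw₀ : 0 ≤ w := fun i => (hw i).le
  have hcont : ∀ x, 0 ≤ x → ContinuousOn (sol x) (Icc 0 T) :=
    fun x hx => HasDerivAt.continuousOn (hsol x hx).2
  have hle_one : ∀ x, 0 ≤ x → ∀ t ∈ Icc 0 T, sol x t ≤ 1 := fun x hx =>
    scs_le_one ha₀ hα.le hβ.le hδ.le hγ.le hw₀ (hsol x hx).2
      ((hsol x hx).1 ▸ fun i => (h0box i).2)
  have hmono : ∀ x y, 0 ≤ x → x ≤ y → ∀ t ∈ Icc 0 T, sol x t ≤ sol y t := fun x y hx hxy =>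
    have hy := hx.trans hxy
    scs_le_of_supersolution ha₀ hα.le hβ.le hδ.le hγ.le hw₀ hxy (hsol x hx).2 (hsol y hy).2
      (fun _ _ => le_rfl) (hle_one y hy) (by rw [(hsol x hx).1, (hsol y hy).1])
  refine sSup_image_budgetSet_mono hB₁ hB.le
    ⟨∫ t in 0..T, ∑ i, w i * (1 : Fin N → ℝ) i, ?_⟩ fun x y hx hxy => ?_
  · rintro _ ⟨x, ⟨hx, -⟩, rfl⟩
    exact integral_weighted_sum_le_of_le hT.le hw₀ (hcont x hx) continuousOn_const
      (hle_one x hx)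
  · exact integral_weighted_sum_le_of_le hT.le hw₀ (hcont x hx) (hcont y (hx.trans hxy))
      (hmono x y hx hxy)
end
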